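/- arXiv:1603.08289 — 3 statements merged into one kernel-verified Lean document; each statement's English description precedes it below -/
import Mathlib

section
/- Let κ*, ρ, σ, φ, T, Δ ∈ ℝ with σ ≠ 0 and Δ > 0. Set a = κ* − ρσφ and assume a² + σ²(φ − φ²) > 0; set b = √(a² + σ²(φ − φ²)) and assume a ≠ b, and set g = (a + b)/(a − b). Define D : ℝ → ℝ by D(t) = ((a + b)/σ²) · (1 − e^{b(T+Δ−t)}) / (1 − g e^{b(T+Δ−t)}). Let t₀ ≤ T + Δ and assume 1 − g e^{b(T+Δ−t)} ≠ 0 for all t ∈ [t₀, T+Δ]. Then D is differentiable on [t₀, T+Δ] with −D′(t) = (1/2)φ(φ − 1) + (ρσφ − κ*)D(t) + (1/2)σ²D(t)², and D(T+Δ) = 0. -/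
/-!
`D = c·q` with `c = (a + b)/σ²` and `q` a Möbius transform of `E = e^{b(T+Δ-t)}`, so `D'` is
explicit. Since `b² - a² = σ²(φ - φ²)`, the Riccati right-hand side is the quadratic
`σ²/2 · (D - (a + b)/σ²)(D - (a - b)/σ²)`; at `D = c·q` both factors are multiples of
`1/(1 - gE)`, and their product is `-D'`. At `t = T + Δ` we have `E = 1`, so `D` vanishes.
-/

open Real

lemma hasDerivAt_one_sub_exp_div_one_sub_mul_exp (b g s t : ℝ)
    (hden : 1 - g * exp (b * (s - t)) ≠ 0) :
    HasDerivAt (fun t => (1 - exp (b * (s - t))) / (1 - g * exp (b * (s - t))))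
      (b * (1 - g) * exp (b * (s - t)) / (1 - g * exp (b * (s - t))) ^ 2) t := by
  have hexp : HasDerivAt (fun t => exp (b * (s - t))) (exp (b * (s - t)) * -b) t := by
    simpa using (((hasDerivAt_id t).const_sub s).const_mul b).exp
  refine ((hexp.const_sub 1).div ((hexp.const_mul g).const_sub 1) hden).congr_deriv ?_
  ring

lemma riccati_quadratic_eq_mul_sub_roots {a b σ φ : ℝ} (hσ : σ ≠ 0)
    (hb2 : b ^ 2 = a ^ 2 + σ ^ 2 * (φ - φ ^ 2)) (D : ℝ) :
    1 / 2 * φ * (φ - 1) - a * D + 1 / 2 * σ ^ 2 * D ^ 2 =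
      σ ^ 2 / 2 * (D - (a + b) / σ ^ 2) * (D - (a - b) / σ ^ 2) := by
  field_simp
  linear_combination hb2

lemma riccati_rhs_at_mobius {a b σ φ g E : ℝ} (hσ : σ ≠ 0) (hab : a ≠ b)
    (hb2 : b ^ 2 = a ^ 2 + σ ^ 2 * (φ - φ ^ 2)) (hg : g = (a + b) / (a - b))
    (hden : 1 - g * E ≠ 0) :
    -(1 / 2 * φ * (φ - 1) - a * ((a + b) / σ ^ 2 * ((1 - E) / (1 - g * E))) +
        1 / 2 * σ ^ 2 * ((a + b) / σ ^ 2 * ((1 - E) / (1 - g * E))) ^ 2) =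
      (a + b) / σ ^ 2 * (b * (1 - g) * E / (1 - g * E) ^ 2) := by
  have hab' : a - b ≠ 0 := sub_ne_zero.mpr hab
  rw [riccati_quadratic_eq_mul_sub_roots hσ hb2]
  subst hg
  have hden' : a - b - (a + b) * E ≠ 0 := by
    rw [div_mul_eq_mul_div, one_sub_div hab'] at hden
    exact (div_ne_zero_iff.mp hden).1
  field_simp
  ring

theorem stmt1_general (κ ρ σ φ T Δ t₀ a b g : ℝ) (hσ : σ ≠ 0)
    (ha : a = κ - ρ * σ * φ)
    (hpos : 0 < a ^ 2 + σ ^ 2 * (φ - φ ^ 2))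
    (hb : b = Real.sqrt (a ^ 2 + σ ^ 2 * (φ - φ ^ 2)))
    (hab : a ≠ b)
    (hg : g = (a + b) / (a - b))
    (D : ℝ → ℝ)
    (hD : D = fun t => (a + b) / σ ^ 2 *
      ((1 - Real.exp (b * (T + Δ - t))) / (1 - g * Real.exp (b * (T + Δ - t)))))
    (hden : ∀ t ∈ Set.Icc t₀ (T + Δ), 1 - g * Real.exp (b * (T + Δ - t)) ≠ 0) :
    (∀ t ∈ Set.Icc t₀ (T + Δ),
      HasDerivWithinAt D
        (-((1 / 2) * φ * (φ - 1) + (ρ * σ * φ - κ) * D t + (1 / 2) * σ ^ 2 * (D t) ^ 2))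
        (Set.Icc t₀ (T + Δ)) t) ∧
    D (T + Δ) = 0 := by
  have hb2 : b ^ 2 = a ^ 2 + σ ^ 2 * (φ - φ ^ 2) := hb ▸ sq_sqrt hpos.le
  have hκ : ρ * σ * φ - κ = -a := by rw [ha]; ring
  subst hD
  refine ⟨fun t ht => ?_, by simp⟩
  rw [hκ, neg_mul, ← sub_eq_add_neg, riccati_rhs_at_mobius hσ hab hb2 hg (hden t ht)]
  exact ((hasDerivAt_one_sub_exp_div_one_sub_mul_exp b g _ t (hden t ht)).const_mul
    ((a + b) / σ ^ 2)).hasDerivWithinAt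

/-- The Heston Riccati coefficient `D(φ,t)`: it is differentiable on `[t₀, T+Δ]`,
satisfies `−D' = ½φ(φ−1) + (ρσφ − κ*)D + ½σ²D²`, and `D(T+Δ) = 0`. -/
theorem stmt1 (κ ρ σ φ T Δ t₀ a b g : ℝ) (hσ : σ ≠ 0) (hΔ : 0 < Δ)
    (ha : a = κ - ρ * σ * φ)
    (hpos : 0 < a ^ 2 + σ ^ 2 * (φ - φ ^ 2))
    (hb : b = Real.sqrt (a ^ 2 + σ ^ 2 * (φ - φ ^ 2)))
    (hab : a ≠ b)
    (hg : g = (a + b) / (a - b))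
    (D : ℝ → ℝ)
    (hD : D = fun t => (a + b) / σ ^ 2 *
      ((1 - Real.exp (b * (T + Δ - t))) / (1 - g * Real.exp (b * (T + Δ - t)))))
    (ht₀ : t₀ ≤ T + Δ)
    (hden : ∀ t ∈ Set.Icc t₀ (T + Δ), 1 - g * Real.exp (b * (T + Δ - t)) ≠ 0) :
    (∀ t ∈ Set.Icc t₀ (T + Δ),
      HasDerivWithinAt D
        (-((1 / 2) * φ * (φ - 1) + (ρ * σ * φ - κ) * D t + (1 / 2) * σ ^ 2 * (D t) ^ 2))
        (Set.Icc t₀ (T + Δ)) t) ∧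
    D (T + Δ) = 0 :=
  stmt1_general κ ρ σ φ T Δ t₀ a b g hσ ha hpos hb hab hg D hD hden
end

section
/- Let α*, η, φ, T ∈ ℝ, let t₀ ≤ T, let β* : ℝ → ℝ and B : ℝ → ℝ be continuous, and let M, L : ℝ → ℝ be differentiable on [t₀, T] with −M′(t) = (1/2)η²M(t)² − (α* + B(t)η²)M(t), M(T) = φ, −L′(t) = α*β*(t)M(t), and L(T) = 0. Define k(t, r) = exp(L(t) + M(t)r). Then for all t ∈ [t₀, T] and all r ∈ ℝ, ∂k/∂t(t,r) + (1/2)η²r ∂²k/∂r²(t,r) + (α*β*(t) − (α* + B(t)η²)r) ∂k/∂r(t,r) = 0, and k(T, r) = e^{φr} for all r ∈ ℝ. -/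
/-- The affine exponential `k(t,r) = exp(L(t) + M(t)r)`, with
`−M' = ½η²M² − (α* + B(t)η²)M`, `M(T) = φ`, `−L' = α*β*(t)M`, `L(T) = 0`,
satisfies the PDE `∂k/∂t + ½η²r ∂²k/∂r² + (α*β*(t) − (α* + B(t)η²)r) ∂k/∂r = 0`
on `[t₀, T]` together with the terminal condition `k(T,r) = e^{φr}`. -/
theorem stmt4 (α η φ T t₀ : ℝ) (ht₀ : t₀ ≤ T)
    (β B : ℝ → ℝ) (hβ : Continuous β) (hB : Continuous B)
    (M L : ℝ → ℝ)
    (hM : ∀ t ∈ Set.Icc t₀ T,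
      HasDerivWithinAt M (-((1 / 2) * η ^ 2 * (M t) ^ 2 - (α + B t * η ^ 2) * M t))
        (Set.Icc t₀ T) t)
    (hMT : M T = φ)
    (hL : ∀ t ∈ Set.Icc t₀ T,
      HasDerivWithinAt L (-(α * β t * M t)) (Set.Icc t₀ T) t)
    (hLT : L T = 0)
    (k : ℝ → ℝ → ℝ) (hk : k = fun t r => Real.exp (L t + M t * r)) :
    (∀ t ∈ Set.Icc t₀ T, ∀ r : ℝ,
      ∃ kt : ℝ, HasDerivWithinAt (fun s => k s r) kt (Set.Icc t₀ T) t ∧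
        kt + (1 / 2) * η ^ 2 * r * deriv (deriv (fun x => k t x)) r
          + (α * β t - (α + B t * η ^ 2) * r) * deriv (fun x => k t x) r = 0) ∧
    (∀ r : ℝ, k T r = Real.exp (φ * r)) := by
  subst hk
  constructor
  · intro t ht r
    have hM' := hM t ht
    have hL' := hL t ht
    -- first derivative in r
    have hr1 : ∀ x : ℝ, HasDerivAt (fun x => Real.exp (L t + M t * x))
        (Real.exp (L t + M t * x) * M t) x := by
      intro x
      have h : HasDerivAt (fun x : ℝ => L t + M t * x) (M t) x := by
        simpa using ((hasDerivAt_id x).const_mul (M t)).const_add (L t)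
      exact h.exp
    have hd1 : deriv (fun x => Real.exp (L t + M t * x))
        = fun x => Real.exp (L t + M t * x) * M t :=
      funext fun x => (hr1 x).deriv
    have hr2 : ∀ x : ℝ, HasDerivAt (fun x => Real.exp (L t + M t * x) * M t)
        (Real.exp (L t + M t * x) * M t * M t) x := fun x => (hr1 x).mul_const (M t)
    have hd2 : deriv (deriv (fun x => Real.exp (L t + M t * x))) r
        = Real.exp (L t + M t * r) * M t * M t := by
      rw [hd1]; exact (hr2 r).deriv
    refine ⟨(-(α * β t * M t) + (-((1 / 2) * η ^ 2 * (M t) ^ 2 - (α + B t * η ^ 2) * M t)) * r)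
        * Real.exp (L t + M t * r), ?_, ?_⟩
    · have h : HasDerivWithinAt (fun s => L s + M s * r)
          (-(α * β t * M t) + (-((1 / 2) * η ^ 2 * (M t) ^ 2 - (α + B t * η ^ 2) * M t)) * r)
          (Set.Icc t₀ T) t := hL'.add (hM'.mul_const r)
      simpa [mul_comm] using h.exp
    · rw [hd2, hd1]
      ring
  · intro r
    simp [hLT, hMT, mul_comm]
end

section
/- Let N ≥ 1, let Q be an N×N real matrix, let α*, η, T ∈ ℝ, and let β*₁, …, β*_N ∈ ℝ. Let B, A₁, …, A_N : ℝ → ℝ be differentiable on [0, T], and define P_i(t, r) = exp(A_i(t) − B(t)r) for 1 ≤ i ≤ N. Then the following are equivalent: (i) for every 1 ≤ i ≤ N, every t ∈ [0, T] and every r > 0, ∂P_i/∂t(t,r) + α*(β*_i − r) ∂P_i/∂r(t,r) + Σ_{j=1}^N Q_{ji} P_j(t,r) + (1/2)η²r ∂²P_i/∂r²(t,r) − r P_i(t,r) = 0; (ii) for every t ∈ [0, T], B′(t) = (1/2)η²B(t)² + α*B(t) − 1 and, for every 1 ≤ i ≤ N, A_i′(t) = α*β*_i B(t) − e^{−A_i(t)}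 Σ_{j=1}^N Q_{ji} e^{A_j(t)}. -/
/-!
Substituting `P_i = exp(A_i(t) − B(t) r)` into the `i`-th PDE and dividing by the positive factor
`exp(−B(t) r)` leaves an expression affine in `r`: its constant term is
`e^{A_i}(A_i' − α*β*_i B) + Σ_j Q_{ji} e^{A_j}` and its `r`-coefficient is `−e^{A_i}` times the
defect of the Riccati equation for `B`. An affine function vanishes on `r > 0` exactly when both
coefficients vanish, which are the two ODEs.
-/

open Real

theorem hasDerivAt_exp_sub_mul (a b r : ℝ) :
    HasDerivAt (fun x => exp (a - b * x)) (-b * exp (a - b * r)) r := by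
  have h : HasDerivAt (fun x => a - b * x) (-(b * 1)) r :=
    ((hasDerivAt_id r).const_mul b).const_sub a
  convert h.exp using 1
  ring

theorem deriv_exp_sub_mul (a b : ℝ) :
    deriv (fun x => exp (a - b * x)) = fun r => -b * exp (a - b * r) :=
  funext fun r => (hasDerivAt_exp_sub_mul a b r).deriv

theorem deriv_deriv_exp_sub_mul (a b r : ℝ) :
    deriv (deriv (fun x => exp (a - b * x))) r = b ^ 2 * exp (a - b * r) := by
  rw [deriv_exp_sub_mul, ((hasDerivAt_exp_sub_mul a b r).const_mul (-b)).deriv]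
  ring

theorem deriv_exp_sub_mul_const {A B : ℝ → ℝ} {a' b' t : ℝ} (hA : HasDerivAt A a' t)
    (hB : HasDerivAt B b' t) (r : ℝ) :
    deriv (fun s => exp (A s - B s * r)) t = (a' - b' * r) * exp (A t - B t * r) := by
  have h : HasDerivAt (fun s => A s - B s * r) (a' - b' * r) t := hA.sub (hB.mul_const r)
  rw [h.exp.deriv]
  ring

theorem sum_mul_exp_sub {ι : Type*} (s : Finset ι) (c a : ι → ℝ) (x : ℝ) :
    ∑ j ∈ s, c j * exp (a j - x) = exp (-x) * ∑ j ∈ s, c j * exp (a j) := by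
  rw [Finset.mul_sum]
  refine Finset.sum_congr rfl fun j _ => ?_
  rw [sub_eq_add_neg, exp_add]
  ring

theorem bond_pde_residual_eq {A B : ℝ → ℝ} {a' b' t : ℝ} (hA : HasDerivAt A a' t)
    (hB : HasDerivAt B b' t) (α β η r S : ℝ) :
    deriv (fun s => exp (A s - B s * r)) t
        + α * (β - r) * deriv (fun x => exp (A t - B t * x)) r
        + exp (-(B t * r)) * S
        + (1 / 2) * η ^ 2 * r * deriv (deriv (fun x => exp (A t - B t * x))) r
        - r * exp (A t - B t * r)
      = exp (-(B t * r)) * ((exp (A t) * (a' - α * β * B t) + S)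
          - r * (exp (A t) * (b' - ((1 / 2) * η ^ 2 * B t ^ 2 + α * B t - 1)))) := by
  rw [deriv_exp_sub_mul_const hA hB, deriv_deriv_exp_sub_mul,
    (hasDerivAt_exp_sub_mul _ _ r).deriv, sub_eq_add_neg (A t), exp_add]
  ring

theorem forall_pos_sub_mul_eq_zero_iff {c d : ℝ} :
    (∀ r > (0 : ℝ), c - r * d = 0) ↔ c = 0 ∧ d = 0 := by
  refine ⟨fun h => ?_, fun ⟨hc, hd⟩ r _ => by rw [hc, hd]; ring⟩
  have h1 := h 1 one_pos
  have h2 := h 2 two_pos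
  constructor <;> linarith

theorem exp_mul_sub_add_eq_zero_iff {a x y S : ℝ} :
    exp a * (x - y) + S = 0 ↔ x = y - exp (-a) * S := by
  have hinv : exp (-a) * exp a = 1 := by rw [← exp_add, neg_add_cancel, exp_zero]
  constructor <;> intro h
  · linear_combination exp (-a) * h - (x - y) * hinv
  · rw [h]
    linear_combination (-S) * hinv

theorem bond_pde_forall_pos_iff {A B : ℝ → ℝ} {a' b' t : ℝ} (hA : HasDerivAt A a' t)
    (hB : HasDerivAt B b' t) (α β η S : ℝ) :
    (∀ r > (0 : ℝ),
        deriv (fun s => exp (A s - B s * r)) t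
          + α * (β - r) * deriv (fun x => exp (A t - B t * x)) r
          + exp (-(B t * r)) * S
          + (1 / 2) * η ^ 2 * r * deriv (deriv (fun x => exp (A t - B t * x))) r
          - r * exp (A t - B t * r) = 0)
      ↔ (b' = (1 / 2) * η ^ 2 * B t ^ 2 + α * B t - 1 ∧ a' = α * β * B t - exp (-A t) * S) := by
  simp only [bond_pde_residual_eq hA hB, mul_eq_zero, exp_ne_zero, false_or]
  rw [forall_pos_sub_mul_eq_zero_iff, exp_mul_sub_add_eq_zero_iff, mul_eq_zero, sub_eq_zero,
    or_iff_right (exp_ne_zero _), and_comm]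

/-- The regime-switching bond prices `P_i(t,r) = exp(A_i(t) − B(t)r)` satisfy the `N`
coupled pricing PDEs if and only if `B` solves the Riccati equation
`B' = ½η²B² + α*B − 1` and each `A_i` solves
`A_i' = α*β*_i B − e^{−A_i} Σ_j Q_{ji} e^{A_j}`. -/
theorem stmt6 (N : ℕ) (hN : 1 ≤ N) (Q : Matrix (Fin N) (Fin N) ℝ)
    (α η T : ℝ) (β : Fin N → ℝ)
    (B : ℝ → ℝ) (B' : ℝ → ℝ)
    (A : Fin N → ℝ → ℝ) (A' : Fin N → ℝ → ℝ)
    (hB : ∀ t ∈ Set.Icc (0 : ℝ) T, HasDerivAt B (B' t) t)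
    (hA : ∀ i, ∀ t ∈ Set.Icc (0 : ℝ) T, HasDerivAt (A i) (A' i t) t)
    (P : Fin N → ℝ → ℝ → ℝ)
    (hP : P = fun i t r => Real.exp (A i t - B t * r)) :
    (∀ i, ∀ t ∈ Set.Icc (0 : ℝ) T, ∀ r > (0 : ℝ),
        deriv (fun s => P i s r) t
          + α * (β i - r) * deriv (fun x => P i t x) r
          + (∑ j, Q j i * P j t r)
          + (1 / 2) * η ^ 2 * r * deriv (deriv (fun x => P i t x)) r
          - r * P i t r = 0)
    ↔ ((∀ t ∈ Set.Icc (0 : ℝ) T,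
          B' t = (1 / 2) * η ^ 2 * (B t) ^ 2 + α * B t - 1) ∧
       (∀ i, ∀ t ∈ Set.Icc (0 : ℝ) T,
          A' i t = α * β i * B t
            - Real.exp (-(A i t)) * ∑ j, Q j i * Real.exp (A j t))) := by
  subst hP
  simp only [sum_mul_exp_sub]
  have hpde i t (ht : t ∈ Set.Icc (0 : ℝ) T) :=
    bond_pde_forall_pos_iff (hA i t ht) (hB t ht) α (β i) η (∑ j, Q j i * exp (A j t))
  constructor
  · intro h
    exact ⟨fun t ht => ((hpde ⟨0, hN⟩ t ht).1 (h ⟨0, hN⟩ t ht)).1,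
      fun i t ht => ((hpde i t ht).1 (h i t ht)).2⟩
  · rintro ⟨hRiccati, hAode⟩ i t ht
    exact (hpde i t ht).2 ⟨hRiccati t ht, hAode i t ht⟩
end
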